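/- Let μ be a probability measure on ℝ^d, supported in a fundamental domain of ℤ^d, such that for some C > 0 and α > 0 one has |μ̂(ξ)| ≤ C|ξ|^{-α} for all ξ ≠ 0. Let T(x) = Ax mod 1 be an expanding toral endomorphism (A a d×d integer matrix with smallest singular value σ > 1), fix k ∈ ℤ^d ∖ {0}, and set S_N(x) = (1/N) Σ_{n=1}^N exp(2πi k·T^n(x)). Then Σ_{N=1}^∞ (1/N) ∫ |S_N(x)|² dμ(x) < ∞. -/

import Mathlib

noncomputable section

open MeasureTheory Real Filter Set
open scoped Topology

/-- Euclidean norm on `ℝ^d` (realised as `Fin d → ℝ`). -/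
def eNorm {d : ℕ} (x : Fin d → ℝ) : ℝ := Real.sqrt (∑ i, x i ^ 2)

/-- Fourier transform of a measure on `ℝ^d`: `μ̂(ξ) = ∫ e^{−2πi ξ·x} dμ(x)`. -/
def ftRd {d : ℕ} (μ : Measure (Fin d → ℝ)) (ξ : Fin d → ℝ) : ℂ :=
  ∫ x, Complex.exp (-(2 * (π : ℂ) * Complex.I) * ((∑ i, ξ i * x i : ℝ) : ℂ)) ∂μ

/-- The toral endomorphism `x ↦ Ax mod 1` on `𝕋^d` induced by an integer matrix `A`. -/
def toralEndo {d : ℕ} (A : Matrix (Fin d) (Fin d) ℤ)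
    (x : Fin d → UnitAddCircle) : Fin d → UnitAddCircle :=
  fun i => ∑ j, A i j • x j

/-- A toral endomorphism is expanding if all singular values of `A` are `> 1`,
equivalently there is `σ > 1` with `|Av| ≥ σ|v|` for all `v ∈ ℝ^d`. -/
def IsExpanding {d : ℕ} (A : Matrix (Fin d) (Fin d) ℤ) : Prop :=
  ∃ σ : ℝ, 1 < σ ∧ ∀ v : Fin d → ℝ,
    σ * eNorm v ≤ eNorm ((A.map (Int.cast : ℤ → ℝ)).mulVec v)

/-- The Weyl sum `S_N(x) = (1/N) Σ_{n=1}^N exp(2πi k·T^n(x))` for the toral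
endomorphism induced by `A`, evaluated at the projection of `x ∈ ℝ^d` to `𝕋^d`. -/
def weylSum {d : ℕ} (A : Matrix (Fin d) (Fin d) ℤ) (k : Fin d → ℤ) (N : ℕ)
    (x : Fin d → ℝ) : ℂ :=
  (∑ n ∈ Finset.Icc 1 N, ∏ i,
    (fourier (k i) ((toralEndo A)^[n] (fun j => ((x j : ℝ) : UnitAddCircle)) i) : ℂ)) / (N : ℂ)

/-! With `e(t) = exp(2πi t)`, the `n`-th term of `S_N` is `e((Aᵀ)ⁿk · x)`, so expanding the
square gives `∫ |S_N|² dμ ≤ N⁻² Σ_{n,m ≤ N} |μ̂((Aᵀ)ᵐk - (Aᵀ)ⁿk)|`. The transpose `Aᵀ` expands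
with the same `σ`, so for `n ≠ m` the frequency has size at least `(1 - σ⁻¹)|k| σ^max(n,m)` and
the Fourier decay bounds the off-diagonal terms by `O(σ^(-α max(n,m)))`. Both these and the
diagonal sum to `O(N)`, hence `∫ |S_N|² dμ = O(1/N)` and the series is dominated by `Σ 1/N²`. -/

open Matrix

section EuclideanNorm

variable {d : ℕ}

lemma eNorm_eq_norm_toLp (x : Fin d → ℝ) : eNorm x = ‖WithLp.toLp 2 x‖ := by
  simp [eNorm, EuclideanSpace.norm_eq, sq_abs]

lemma eNorm_nonneg (x : Fin d → ℝ) : 0 ≤ eNorm x := Real.sqrt_nonneg _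

lemma eNorm_pos {x : Fin d → ℝ} : 0 < eNorm x ↔ x ≠ 0 := by
  simp [eNorm_eq_norm_toLp]

lemma eNorm_sub_comm (x y : Fin d → ℝ) : eNorm (x - y) = eNorm (y - x) := by
  simp only [eNorm_eq_norm_toLp, WithLp.toLp_sub, norm_sub_rev]

lemma eNorm_sub_eNorm_le (x y : Fin d → ℝ) : eNorm x - eNorm y ≤ eNorm (x - y) := by
  simpa only [eNorm_eq_norm_toLp, WithLp.toLp_sub] using norm_sub_norm_le _ _

lemma eNorm_sq (x : Fin d → ℝ) : eNorm x ^ 2 = x ⬝ᵥ x := by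
  rw [eNorm, Real.sq_sqrt (by positivity)]
  simp [dotProduct, sq]

lemma dotProduct_le_eNorm_mul_eNorm (x y : Fin d → ℝ) : x ⬝ᵥ y ≤ eNorm x * eNorm y := by
  simpa [eNorm_eq_norm_toLp, EuclideanSpace.inner_eq_star_dotProduct, dotProduct_comm]
    using real_inner_le_norm (WithLp.toLp 2 x) (WithLp.toLp 2 y)

end EuclideanNorm

section Expansion

variable {d : ℕ} {M : Matrix (Fin d) (Fin d) ℝ} {σ : ℝ}

lemma mulVec_injective_of_expands (hσ : 0 < σ) (hM : ∀ v, σ * eNorm v ≤ eNorm (M *ᵥ v)) :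
    Function.Injective M.mulVec := by
  intro a b hab
  have h := hM (a - b)
  rw [mulVec_sub, hab, sub_self, eNorm_eq_norm_toLp 0, WithLp.toLp_zero, norm_zero] at h
  by_contra hne
  exact (nonpos_of_mul_nonpos_right h hσ).not_gt (eNorm_pos.2 (sub_ne_zero.2 hne))

/-- Writing `v = M x` (`M` is invertible), Cauchy–Schwarz gives
`‖v‖² = ⟪x, Mᵀ v⟫ ≤ σ⁻¹ ‖v‖ ‖Mᵀ v‖`. -/
lemma expands_transpose (hσ : 0 < σ) (hM : ∀ v, σ * eNorm v ≤ eNorm (M *ᵥ v))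
    (v : Fin d → ℝ) : σ * eNorm v ≤ eNorm (Mᵀ *ᵥ v) := by
  have hsurj : Function.Surjective M.mulVec :=
    mulVec_surjective_iff_isUnit.2 (mulVec_injective_iff_isUnit.1
      (mulVec_injective_of_expands hσ hM))
  obtain ⟨x, rfl⟩ := hsurj v
  have hx := hM x
  have hcs : eNorm (M *ᵥ x) ^ 2 ≤ eNorm x * eNorm (Mᵀ *ᵥ M *ᵥ x) := by
    rw [eNorm_sq, ← vecMul_transpose, ← dotProduct_mulVec]
    exact dotProduct_le_eNorm_mul_eNorm _ _
  rcases (eNorm_nonneg (M *ᵥ x)).eq_or_lt with h0 | hpos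
  · rw [← h0, mul_zero]
    exact eNorm_nonneg _
  · nlinarith [eNorm_nonneg (Mᵀ *ᵥ M *ᵥ x)]

lemma expands_pow (hσ : 0 ≤ σ) (hM : ∀ v, σ * eNorm v ≤ eNorm (M *ᵥ v)) (n : ℕ)
    (v : Fin d → ℝ) : σ ^ n * eNorm v ≤ eNorm ((M ^ n) *ᵥ v) := by
  induction n with
  | zero => simp
  | succ n ih =>
    calc σ ^ (n + 1) * eNorm v = σ * (σ ^ n * eNorm v) := by ring
      _ ≤ σ * eNorm ((M ^ n) *ᵥ v) := mul_le_mul_of_nonneg_left ih hσ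
      _ ≤ eNorm ((M ^ (n + 1)) *ᵥ v) := by
        rw [pow_succ', ← mulVec_mulVec]
        exact hM _

/-- `Mᵐv - Mⁿv = Mⁿ(M^(m-n)v - v)` has size at least `σⁿ(σ^(m-n) - 1)‖v‖`. -/
lemma expands_orbit_separated (hσ : 1 < σ) (hM : ∀ v, σ * eNorm v ≤ eNorm (M *ᵥ v))
    (v : Fin d → ℝ) {n m : ℕ} (hnm : n < m) :
    (1 - σ⁻¹) * eNorm v * σ ^ m ≤ eNorm ((M ^ m) *ᵥ v - (M ^ n) *ᵥ v) := by
  obtain ⟨j, rfl⟩ := Nat.exists_eq_add_of_lt hnm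
  have hσ0 : 0 < σ := one_pos.trans hσ
  have hfar : σ ^ (j + 1) * eNorm v - eNorm v ≤ eNorm ((M ^ (j + 1)) *ᵥ v - v) :=
    (sub_le_sub_right (expands_pow hσ0.le hM _ v) _).trans (eNorm_sub_eNorm_le _ _)
  have hdiff : (M ^ (n + j + 1)) *ᵥ v - (M ^ n) *ᵥ v = (M ^ n) *ᵥ ((M ^ (j + 1)) *ᵥ v - v) := by
    rw [mulVec_sub, mulVec_mulVec, ← pow_add, add_assoc]
  have hσj : 1 ≤ σ ^ j := one_le_pow₀ hσ.le
  rw [hdiff]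
  refine le_trans ?_ (expands_pow hσ0.le hM n _)
  calc (1 - σ⁻¹) * eNorm v * σ ^ (n + j + 1)
      = σ ^ n * ((σ ^ (j + 1) - σ ^ j) * eNorm v) := by
        field_simp
        ring
    _ ≤ σ ^ n * (σ ^ (j + 1) * eNorm v - eNorm v) := by
        gcongr
        nlinarith [eNorm_nonneg v]
    _ ≤ σ ^ n * eNorm ((M ^ (j + 1)) *ᵥ v - v) := by gcongr

end Expansion

lemma IsExpanding.transpose {d : ℕ} {A : Matrix (Fin d) (Fin d) ℤ} (hA : IsExpanding A) :
    IsExpanding Aᵀ := by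
  obtain ⟨σ, hσ, hM⟩ := hA
  exact ⟨σ, hσ, by simpa only [transpose_map] using expands_transpose (one_pos.trans hσ) hM⟩

section Characters

variable {d : ℕ}

def expDot (v x : Fin d → ℝ) : ℂ :=
  Complex.exp (2 * π * Complex.I * ((v ⬝ᵥ x : ℝ) : ℂ))

lemma norm_expDot (v x : Fin d → ℝ) : ‖expDot v x‖ = 1 := by
  simp [expDot, Complex.norm_exp]

lemma continuous_expDot (v : Fin d → ℝ) : Continuous (expDot v) := by
  unfold expDot dotProduct
  fun_prop

lemma expDot_mul_conj (v w x : Fin d → ℝ) :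
    expDot v x * starRingEnd ℂ (expDot w x) = expDot (v - w) x := by
  rw [expDot, expDot, expDot, ← Complex.exp_conj, ← Complex.exp_add, sub_dotProduct]
  push_cast
  simp only [map_mul, map_ofNat, Complex.conj_ofReal, Complex.conj_I]
  ring_nf

lemma integral_expDot (μ : Measure (Fin d → ℝ)) (v : Fin d → ℝ) :
    ∫ x, expDot v x ∂μ = ftRd μ (-v) := by
  simp only [ftRd, expDot, dotProduct, Pi.neg_apply, neg_mul, Finset.sum_neg_distrib]
  push_cast
  ring_nf

lemma toralEndo_iterate_coe (A : Matrix (Fin d) (Fin d) ℤ) (n : ℕ) (x : Fin d → ℝ) :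
    (toralEndo A)^[n] (fun j => (x j : UnitAddCircle))
      = fun i => ((((A.map (Int.cast : ℤ → ℝ)) ^ n) *ᵥ x) i : UnitAddCircle) := by
  induction n with
  | zero => simp
  | succ n ih =>
    funext i
    rw [Function.iterate_succ_apply', ih, pow_succ', ← mulVec_mulVec]
    simp only [toralEndo, ← AddCircle.coe_zsmul, zsmul_eq_mul, mulVec, dotProduct, map_apply]
    exact (map_sum (QuotientAddGroup.mk' (AddSubgroup.zmultiples (1 : ℝ))) _ _).symm

lemma prod_fourier_coe (k : Fin d → ℤ) (y : Fin d → ℝ) :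
    ∏ i, (fourier (k i) (y i : UnitAddCircle) : ℂ) = expDot (fun i => (k i : ℝ)) y := by
  simp only [fourier_coe_apply, ← Complex.exp_sum, expDot, dotProduct, Complex.ofReal_sum]
  congr 1
  rw [Finset.mul_sum]
  push_cast
  ring_nf

end Characters

def weylFrequency {d : ℕ} (A : Matrix (Fin d) (Fin d) ℤ) (k : Fin d → ℤ) (n : ℕ) : Fin d → ℝ :=
  ((Aᵀ.map (Int.cast : ℤ → ℝ)) ^ n) *ᵥ fun i => (k i : ℝ)

lemma weylSum_eq_sum_expDot {d : ℕ} (A : Matrix (Fin d) (Fin d) ℤ) (k : Fin d → ℤ) (N : ℕ)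
    (x : Fin d → ℝ) :
    weylSum A k N x = (∑ n ∈ Finset.Icc 1 N, expDot (weylFrequency A k n) x) / N := by
  simp only [weylSum, weylFrequency, toralEndo_iterate_coe, prod_fourier_coe, expDot,
    dotProduct_mulVec, transpose_map, ← transpose_pow, mulVec_transpose]

lemma integral_norm_sum_sq_le {X ι : Type*} [MeasurableSpace X] (μ : Measure X)
    (s : Finset ι) (f : ι → X → ℂ)
    (hf : ∀ i j, Integrable (fun x => f i x * starRingEnd ℂ (f j x)) μ) :
    ∫ x, ‖∑ i ∈ s, f i x‖ ^ 2 ∂μ ≤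
      ∑ i ∈ s, ∑ j ∈ s, ‖∫ x, f i x * starRingEnd ℂ (f j x) ∂μ‖ := by
  have hsq : ∀ x, ((‖∑ i ∈ s, f i x‖ ^ 2 : ℝ) : ℂ)
      = ∑ i ∈ s, ∑ j ∈ s, f i x * starRingEnd ℂ (f j x) := by
    intro x
    rw [Complex.ofReal_pow, ← Complex.mul_conj', map_sum, Finset.sum_mul_sum]
  have hint : ((∫ x, ‖∑ i ∈ s, f i x‖ ^ 2 ∂μ : ℝ) : ℂ)
      = ∑ i ∈ s, ∑ j ∈ s, ∫ x, f i x * starRingEnd ℂ (f j x) ∂μ := by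
    rw [← integral_complex_ofReal, integral_congr_ae (ae_of_all _ hsq),
      integral_finsetSum _ fun i _ => integrable_finsetSum _ fun j _ => hf i j]
    exact Finset.sum_congr rfl fun i _ => integral_finsetSum _ fun j _ => hf i j
  calc ∫ x, ‖∑ i ∈ s, f i x‖ ^ 2 ∂μ = ‖((∫ x, ‖∑ i ∈ s, f i x‖ ^ 2 ∂μ : ℝ) : ℂ)‖ := by
        rw [Complex.norm_real, Real.norm_of_nonneg (integral_nonneg fun x => by positivity)]
    _ ≤ _ := by
        rw [hint]
        exact (norm_sum_le _ _).trans (Finset.sum_le_sum fun i _ => norm_sum_le _ _)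

lemma integral_norm_weylSum_sq_le {d : ℕ} (μ : Measure (Fin d → ℝ)) [IsFiniteMeasure μ]
    (A : Matrix (Fin d) (Fin d) ℤ) (k : Fin d → ℤ) (N : ℕ) :
    ∫ x, ‖weylSum A k N x‖ ^ 2 ∂μ ≤
      (∑ n ∈ Finset.Icc 1 N, ∑ m ∈ Finset.Icc 1 N,
        ‖ftRd μ (weylFrequency A k m - weylFrequency A k n)‖) / (N : ℝ) ^ 2 := by
  have hint : ∀ v, Integrable (expDot v) μ := fun v =>
    .of_bound (continuous_expDot v).aestronglyMeasurable 1
      (ae_of_all _ fun x => (norm_expDot v x).le)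
  simp only [weylSum_eq_sum_expDot, norm_div, div_pow, Complex.norm_natCast, integral_div]
  gcongr
  refine (integral_norm_sum_sq_le μ _ _ fun n m => ?_).trans_eq ?_
  · simpa only [expDot_mul_conj] using hint _
  · simp only [expDot_mul_conj, integral_expDot, neg_sub]

section FourierDecay

variable {d : ℕ} {μ : Measure (Fin d → ℝ)} {C α : ℝ}

lemma norm_ftRd_le_one [IsProbabilityMeasure μ] (ξ : Fin d → ℝ) : ‖ftRd μ ξ‖ ≤ 1 := by
  rw [← neg_neg ξ, ← integral_expDot]
  simpa using norm_integral_le_of_norm_le_const (μ := μ)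
    (ae_of_all _ fun x => (norm_expDot (-ξ) x).le)

lemma norm_ftRd_le_of_le_eNorm (hC : 0 ≤ C) (hα : 0 ≤ α)
    (hdecay : ∀ ξ : Fin d → ℝ, ξ ≠ 0 → ‖ftRd μ ξ‖ ≤ C * eNorm ξ ^ (-α))
    {ξ : Fin d → ℝ} {t : ℝ} (ht : 0 < t) (htξ : t ≤ eNorm ξ) : ‖ftRd μ ξ‖ ≤ C * t ^ (-α) :=
  (hdecay ξ (eNorm_pos.1 (ht.trans_le htξ))).trans
    (mul_le_mul_of_nonneg_left (Real.rpow_le_rpow_of_nonpos ht htξ (neg_nonpos.2 hα)) hC)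

lemma norm_ftRd_orbit_sub_le (hC : 0 ≤ C) (hα : 0 ≤ α)
    (hdecay : ∀ ξ : Fin d → ℝ, ξ ≠ 0 → ‖ftRd μ ξ‖ ≤ C * eNorm ξ ^ (-α))
    {M : Matrix (Fin d) (Fin d) ℝ} {σ : ℝ} (hσ : 1 < σ)
    (hM : ∀ v, σ * eNorm v ≤ eNorm (M *ᵥ v)) {v : Fin d → ℝ} (hv : v ≠ 0)
    {n m : ℕ} (hnm : n ≠ m) :
    ‖ftRd μ ((M ^ m) *ᵥ v - (M ^ n) *ᵥ v)‖
      ≤ C * ((1 - σ⁻¹) * eNorm v) ^ (-α) * (σ ^ (-α)) ^ max n m := by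
  have hσ0 : 0 < σ := one_pos.trans hσ
  have hc : 0 < (1 - σ⁻¹) * eNorm v :=
    mul_pos (sub_pos.2 (inv_lt_one_of_one_lt₀ hσ)) (eNorm_pos.2 hv)
  have hsep : (1 - σ⁻¹) * eNorm v * σ ^ max n m ≤ eNorm ((M ^ m) *ᵥ v - (M ^ n) *ᵥ v) := by
    rcases hnm.lt_or_gt with h | h
    · rw [max_eq_right h.le]
      exact expands_orbit_separated hσ hM v h
    · rw [max_eq_left h.le, eNorm_sub_comm]
      exact expands_orbit_separated hσ hM v h
  calc ‖ftRd μ ((M ^ m) *ᵥ v - (M ^ n) *ᵥ v)‖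
      ≤ C * ((1 - σ⁻¹) * eNorm v * σ ^ max n m) ^ (-α) :=
        norm_ftRd_le_of_le_eNorm hC hα hdecay (by positivity) hsep
    _ = C * ((1 - σ⁻¹) * eNorm v) ^ (-α) * (σ ^ (-α)) ^ max n m := by
        rw [Real.mul_rpow hc.le (by positivity), Real.rpow_pow_comm hσ0.le, mul_assoc]

end FourierDecay

lemma sum_sum_le_card_mul {ι : Type*} [DecidableEq ι] (s : Finset ι) {c : ι → ι → ℝ}
    {a : ι → ℝ} (ha : Summable a) (ha0 : ∀ i, 0 ≤ a i)
    (hc : ∀ i j, c i j ≤ (if i = j then 1 else 0) + a i + a j) :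
    ∑ i ∈ s, ∑ j ∈ s, c i j ≤ s.card * (1 + 2 * ∑' i, a i) := by
  have hsum : ∑ i ∈ s, a i ≤ ∑' i, a i := ha.sum_le_tsum s fun i _ => ha0 i
  calc ∑ i ∈ s, ∑ j ∈ s, c i j
      ≤ ∑ i ∈ s, ∑ j ∈ s, ((if i = j then 1 else 0) + a i + a j) :=
        Finset.sum_le_sum fun i _ => Finset.sum_le_sum fun j _ => hc i j
    _ = s.card + 2 * (s.card * ∑ i ∈ s, a i) := by
        simp only [Finset.sum_add_distrib, Finset.sum_ite_eq, Finset.sum_const, nsmul_eq_mul,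
          ← Finset.mul_sum]
        simp only [Finset.sum_ite_mem, Finset.inter_self, Finset.sum_const, nsmul_eq_mul, mul_one]
        ring
    _ ≤ s.card * (1 + 2 * ∑' i, a i) := by
        nlinarith [Nat.cast_nonneg (α := ℝ) s.card]

lemma exists_integral_norm_weylSum_sq_le {d : ℕ} (μ : Measure (Fin d → ℝ))
    [IsProbabilityMeasure μ] {C α : ℝ} (hC : 0 ≤ C) (hα : 0 < α)
    (hdecay : ∀ ξ : Fin d → ℝ, ξ ≠ 0 → ‖ftRd μ ξ‖ ≤ C * eNorm ξ ^ (-α))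
    {A : Matrix (Fin d) (Fin d) ℤ} (hA : IsExpanding A) {k : Fin d → ℤ} (hk : k ≠ 0) :
    ∃ L, ∀ N : ℕ, ∫ x, ‖weylSum A k N x‖ ^ 2 ∂μ ≤ L / N := by
  obtain ⟨σ, hσ, hM⟩ := hA.transpose
  have hv : (fun i => (k i : ℝ)) ≠ 0 := fun h => hk (funext fun i => by simpa using congrFun h i)
  set K := C * ((1 - σ⁻¹) * eNorm fun i => (k i : ℝ)) ^ (-α)
  set r := σ ^ (-α)
  have hK : 0 ≤ K := mul_nonneg hC (Real.rpow_nonneg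
    (mul_nonneg (sub_nonneg.2 (inv_le_one_of_one_le₀ hσ.le)) (eNorm_nonneg _)) _)
  have hr0 : 0 ≤ r := by positivity
  have hr1 : r < 1 := Real.rpow_lt_one_of_one_lt_of_neg hσ (neg_neg_of_pos hα)
  have hcorr : ∀ n m, ‖ftRd μ (weylFrequency A k m - weylFrequency A k n)‖
      ≤ (if n = m then 1 else 0) + K * r ^ n + K * r ^ m := by
    intro n m
    have hn : 0 ≤ K * r ^ n := by positivity
    have hm : 0 ≤ K * r ^ m := by positivity
    rcases eq_or_ne n m with rfl | hnm
    · rw [if_pos rfl]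
      linarith [norm_ftRd_le_one (μ := μ) (weylFrequency A k n - weylFrequency A k n)]
    · have h : ‖ftRd μ (weylFrequency A k m - weylFrequency A k n)‖ ≤ K * r ^ max n m :=
        norm_ftRd_orbit_sub_le hC hα.le hdecay hσ hM hv hnm
      rw [if_neg hnm, zero_add]
      rcases max_choice n m with hmax | hmax <;> rw [hmax] at h <;> linarith
  refine ⟨1 + 2 * ∑' n, K * r ^ n, fun N => ?_⟩
  have hsum := sum_sum_le_card_mul (Finset.Icc 1 N)
    ((summable_geometric_of_lt_one hr0 hr1).mul_left K) (fun n => by positivity) hcorr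
  rw [Nat.card_Icc, Nat.add_sub_cancel] at hsum
  rcases N.eq_zero_or_pos with rfl | hN
  · simp [weylSum]
  calc ∫ x, ‖weylSum A k N x‖ ^ 2 ∂μ
      ≤ N * (1 + 2 * ∑' n, K * r ^ n) / (N : ℝ) ^ 2 :=
        (integral_norm_weylSum_sq_le μ A k N).trans (by gcongr)
    _ = (1 + 2 * ∑' n, K * r ^ n) / N := by
        field_simp

theorem stmt19_general {d : ℕ} (μ : Measure (Fin d → ℝ)) [IsProbabilityMeasure μ]
    (C α : ℝ) (hC : 0 < C) (hα : 0 < α)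
    (hdecay : ∀ ξ : Fin d → ℝ, ξ ≠ 0 → ‖ftRd μ ξ‖ ≤ C * eNorm ξ ^ (-α))
    (A : Matrix (Fin d) (Fin d) ℤ) (hA : IsExpanding A)
    (k : Fin d → ℤ) (hk : k ≠ 0) :
    Summable fun N : ℕ =>
      (1 / (N + 1 : ℝ)) * ∫ x, ‖weylSum A k (N + 1) x‖ ^ 2 ∂μ := by
  obtain ⟨L, hL⟩ := exists_integral_norm_weylSum_sq_le μ hC.le hα hdecay hA hk
  have hsq : Summable fun N : ℕ => L * (1 / ((N + 1 : ℕ) : ℝ) ^ 2) :=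
    ((summable_nat_add_iff 1).2 (Real.summable_one_div_nat_pow.2 one_lt_two)).mul_left L
  refine hsq.of_nonneg_of_le (fun N => by positivity) fun N => ?_
  calc (1 / (N + 1 : ℝ)) * ∫ x, ‖weylSum A k (N + 1) x‖ ^ 2 ∂μ
      ≤ (1 / (N + 1 : ℝ)) * (L / (N + 1 : ℕ)) := by gcongr; exact hL (N + 1)
    _ = L * (1 / ((N + 1 : ℕ) : ℝ) ^ 2) := by push_cast; field_simp

/-- If a probability measure `μ` on `ℝ^d`, supported in a fundamental domain of `ℤ^d`,
has Fourier decay `|μ̂(ξ)| ≤ C|ξ|^{-α}` for all `ξ ≠ 0`, `T` is an expanding toral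
endomorphism and `k ∈ ℤ^d ∖ {0}`, then `Σ_{N=1}^∞ (1/N) ∫ |S_N(x)|² dμ(x) < ∞`. -/
theorem stmt19 {d : ℕ} (μ : Measure (Fin d → ℝ)) [IsProbabilityMeasure μ]
    (hsupp : μ ({x : Fin d → ℝ | ∀ i, x i ∈ Ico (0 : ℝ) 1}ᶜ) = 0)
    (C α : ℝ) (hC : 0 < C) (hα : 0 < α)
    (hdecay : ∀ ξ : Fin d → ℝ, ξ ≠ 0 → ‖ftRd μ ξ‖ ≤ C * eNorm ξ ^ (-α))
    (A : Matrix (Fin d) (Fin d) ℤ) (hA : IsExpanding A)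
    (k : Fin d → ℤ) (hk : k ≠ 0) :
    Summable fun N : ℕ =>
      (1 / (N + 1 : ℝ)) * ∫ x, ‖weylSum A k (N + 1) x‖ ^ 2 ∂μ :=
  stmt19_general μ C α hC hα hdecay A hA k hk
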